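/- Let X be a real Banach space whose dual X* is isometrically isomorphic to ℓ₁. If X contains an isometric copy of c, then X is not polyhedral; equivalently, a polyhedral predual of ℓ₁ contains no isometric copy of c. -/

import Mathlib

/-!
Polyhedrality passes to subspaces, hence to isometric copies, so it suffices to see that `c` is
not polyhedral. With `t m = 1 / (m + 1)`, the norm of `a • u + b • v` on the plane spanned by
`u m = 1 - t m ^ 2` and `v m = t m` is the supremum of `|a * (1 - t m ^ 2) + b * t m|`, so the
unit ball of this plane is cut out by the lines dual to the points `(1 - t m ^ 2, t m)` of a
parabola. Consecutive lines meet in a vertex of the ball, so it has infinitely many extreme points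
and is not a polytope.
-/

open Filter Topology Metric
open scoped ENNReal

noncomputable section

/-- The space `ℓ₁` of absolutely summable real sequences. -/
abbrev EllOne : Type := lp (fun _ : ℕ => ℝ) 1

/-- The subspace of `ℓ∞` consisting of convergent real sequences. -/
def convSeq : Subspace ℝ (lp (fun _ : ℕ => ℝ) ∞) where
  carrier := {f | ∃ l : ℝ, Tendsto (fun n => f n) atTop (𝓝 l)}
  add_mem' := by
    rintro f g ⟨a, ha⟩ ⟨b, hb⟩
    exact ⟨a + b, by simpa [lp.coeFn_add] using ha.add hb⟩
  zero_mem' := ⟨0, by simp [lp.coeFn_zero]⟩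
  smul_mem' := by
    rintro c f ⟨a, ha⟩
    exact ⟨c * a, by simpa [lp.coeFn_smul] using ha.const_mul c⟩

/-- The Banach space `c` of convergent real sequences with the sup norm,
realized as a subspace of `ℓ∞`. -/
abbrev SpaceC : Type := ↥convSeq

/-- A normed space is polyhedral if the unit ball of each of its
finite-dimensional subspaces is a polytope (the convex hull of finitely many points). -/
def IsPolyhedralSpace (X : Type*) [NormedAddCommGroup X] [NormedSpace ℝ X] : Prop :=
  ∀ Y : Subspace ℝ X, FiniteDimensional ℝ Y →
    ∃ F : Set Y, F.Finite ∧ closedBall (0 : Y) 1 = convexHull ℝ F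

/-- The set of extreme points of the closed unit ball of the dual of `X`. -/
def extBdual (X : Type*) [NormedAddCommGroup X] [NormedSpace ℝ X] :
    Set (StrongDual ℝ X) :=
  Set.extremePoints ℝ (closedBall (0 : StrongDual ℝ X) 1)

/-- `D(x) = {x* ∈ S_{X*} : x*(x) = 1}`. -/
def Dface {X : Type*} [NormedAddCommGroup X] [NormedSpace ℝ X] (x : X) :
    Set (StrongDual ℝ X) :=
  {f | ‖f‖ = 1 ∧ f x = 1}

section Polyhedral

variable {E X : Type*} [NormedAddCommGroup E] [NormedSpace ℝ E]
  [NormedAddCommGroup X] [NormedSpace ℝ X]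

theorem IsPolyhedralSpace.finite_extremePoints (h : IsPolyhedralSpace E) (Y : Subspace ℝ E)
    [FiniteDimensional ℝ Y] : ((closedBall (0 : Y) 1).extremePoints ℝ).Finite := by
  obtain ⟨F, hF, hball⟩ := h Y inferInstance
  rw [hball]
  exact hF.subset extremePoints_convexHull_subset

theorem IsPolyhedralSpace.of_linearIsometry (h : IsPolyhedralSpace X) (f : E →ₗᵢ[ℝ] X) :
    IsPolyhedralSpace E := by
  intro Y _
  let e : Y ≃ₗᵢ[ℝ] Y.map f.toLinearMap :=
    .ofSurjective (f.submoduleMap Y) fun ⟨_, x, hx, hfx⟩ => ⟨⟨x, hx⟩, Subtype.ext hfx⟩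
  obtain ⟨F, hF, hball⟩ := h (Y.map f.toLinearMap) inferInstance
  refine ⟨e.symm '' F, hF.image _, ?_⟩
  calc closedBall (0 : Y) 1 = e.symm '' closedBall 0 1 := by simp
    _ = convexHull ℝ (e.symm '' F) := by
      rw [hball]; exact e.symm.toLinearEquiv.toLinearMap.image_convexHull F

end Polyhedral

theorem mem_extremePoints_of_forall_apply_eq_one {ι E : Type*} [AddCommGroup E] [Module ℝ E]
    {B : Set E} {x : E} (φ : ι → E →ₗ[ℝ] ℝ) (hφB : ∀ y ∈ B, ∀ i, φ i y ≤ 1) (hx : x ∈ B)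
    (hφx : ∀ i, φ i x = 1) (hunique : ∀ y ∈ B, (∀ i, φ i y = 1) → y = x) :
    x ∈ B.extremePoints ℝ := by
  refine ⟨hx, ?_⟩
  rintro y₁ hy₁ y₂ hy₂ ⟨a, b, ha, hb, hab, hxy⟩
  refine hunique y₁ hy₁ fun i => ?_
  have h := congrArg (φ i) hxy
  simp only [map_add, map_smul, smul_eq_mul, hφx] at h
  nlinarith [hφB y₁ hy₁ i, hφB y₂ hy₂ i]

namespace SpaceC

def ofTendsto (f : ℕ → ℝ) {l : ℝ} (hf : Tendsto f atTop (𝓝 l)) : SpaceC :=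
  ⟨⟨f, memℓp_infty_iff.2 (isBounded_range_of_tendsto _ hf.norm).bddAbove⟩, l, hf⟩

def coord (m : ℕ) : SpaceC →ₗ[ℝ] ℝ := (lp.evalₗ _ ∞ m).comp convSeq.subtype

@[simp]
theorem coord_ofTendsto (f : ℕ → ℝ) {l : ℝ} (hf : Tendsto f atTop (𝓝 l)) (m : ℕ) :
    coord m (ofTendsto f hf) = f m := rfl

theorem abs_coord_le_norm (y : SpaceC) (m : ℕ) : |coord m y| ≤ ‖y‖ :=
  lp.norm_apply_le_norm ENNReal.top_ne_zero (y : lp (fun _ : ℕ => ℝ) ∞) m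

def node (m : ℕ) : ℝ := 1 / (m + 1)

theorem node_pos (m : ℕ) : 0 < node m := Nat.one_div_pos_of_nat

theorem node_le_one (m : ℕ) : node m ≤ 1 :=
  div_le_one_of_le₀ (by simp) (by positivity)

theorem node_strictAnti : StrictAnti node := fun _ _ h =>
  Nat.one_div_lt_one_div h

theorem tendsto_node : Tendsto node atTop (𝓝 0) := tendsto_one_div_add_atTop_nhds_zero_nat

def parabolaU : SpaceC :=
  ofTendsto (fun m => 1 - node m ^ 2) (by simpa using (tendsto_node.pow 2).const_sub 1)

def parabolaV : SpaceC := ofTendsto node tendsto_node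

def parabolaPlane : Subspace ℝ SpaceC := Submodule.span ℝ {parabolaU, parabolaV}

instance : FiniteDimensional ℝ parabolaPlane :=
  FiniteDimensional.span_of_finite ℝ (Set.toFinite _)

theorem coord_smul_add_smul (a b : ℝ) (m : ℕ) :
    coord m (a • parabolaU + b • parabolaV) = a * (1 - node m ^ 2) + b * node m := by
  simp [parabolaU, parabolaV]

-- The point of the plane whose coordinates `n` and `n + 1` both equal `1`.
def vertex (n : ℕ) : SpaceC :=
  (1 + node n * node (n + 1))⁻¹ • parabolaU +
    ((node n + node (n + 1)) / (1 + node n * node (n + 1))) • parabolaV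

theorem vertex_mem_parabolaPlane (n : ℕ) : vertex n ∈ parabolaPlane :=
  Submodule.mem_span_pair.2 ⟨_, _, rfl⟩

theorem one_le_one_add_node_mul_node (n k : ℕ) : 1 ≤ 1 + node n * node k :=
  le_add_of_nonneg_right (mul_pos (node_pos n) (node_pos k)).le

theorem coord_vertex (n m : ℕ) : coord m (vertex n) =
    1 - (node m - node n) * (node m - node (n + 1)) / (1 + node n * node (n + 1)) := by
  have hD : 1 + node n * node (n + 1) ≠ 0 := by
    linarith [one_le_one_add_node_mul_node n (n + 1)]
  rw [vertex, coord_smul_add_smul]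
  field_simp
  ring

theorem node_sub_mul_node_sub_nonneg (n m : ℕ) :
    0 ≤ (node m - node n) * (node m - node (n + 1)) := by
  rcases le_or_gt m n with h | h
  · exact mul_nonneg (sub_nonneg.2 (node_strictAnti.antitone h))
      (sub_nonneg.2 (node_strictAnti.antitone (h.trans n.le_succ)))
  · exact mul_nonneg_of_nonpos_of_nonpos (sub_nonpos.2 (node_strictAnti.antitone h.le))
      (sub_nonpos.2 (node_strictAnti.antitone h))

theorem abs_coord_vertex_le_one (n m : ℕ) : |coord m (vertex n)| ≤ 1 := by
  have hp := node_sub_mul_node_sub_nonneg n m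
  have hp₁ : (node m - node n) * (node m - node (n + 1)) ≤ 1 := by
    nlinarith [node_pos m, node_pos n, node_pos (n + 1), node_le_one m, node_le_one n,
      node_le_one (n + 1)]
  have hD := one_le_one_add_node_mul_node n (n + 1)
  rw [coord_vertex, abs_le]
  constructor <;> linarith [div_nonneg hp (zero_le_one.trans hD), div_le_self hp hD]

theorem norm_vertex_le_one (n : ℕ) : ‖vertex n‖ ≤ 1 :=
  lp.norm_le_of_forall_le zero_le_one fun m => abs_coord_vertex_le_one n m

theorem coord_vertex_eq_one_iff (n m : ℕ) : coord m (vertex n) = 1 ↔ m = n ∨ m = n + 1 := by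
  have hD : 1 + node n * node (n + 1) ≠ 0 := by
    linarith [one_le_one_add_node_mul_node n (n + 1)]
  rw [coord_vertex, sub_eq_self, div_eq_zero_iff, or_iff_left hD, mul_eq_zero, sub_eq_zero,
    sub_eq_zero, node_strictAnti.injective.eq_iff, node_strictAnti.injective.eq_iff]

theorem vertex_injective : Function.Injective vertex := by
  intro k n h
  have h₁ := (coord_vertex_eq_one_iff k n).1 (h ▸ (coord_vertex_eq_one_iff n n).2 (.inl rfl))
  have h₂ := (coord_vertex_eq_one_iff k (n + 1)).1
    (h ▸ (coord_vertex_eq_one_iff n (n + 1)).2 (.inr rfl))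
  omega

theorem eq_vertex_of_coord_eq_one {n : ℕ} {y : SpaceC} (hy : y ∈ parabolaPlane)
    (hn : coord n y = 1) (hn' : coord (n + 1) y = 1) : y = vertex n := by
  obtain ⟨a, b, rfl⟩ := Submodule.mem_span_pair.1 hy
  rw [coord_smul_add_smul] at hn hn'
  have hsr : node (n + 1) < node n := node_strictAnti n.lt_succ_self
  have hb : b = a * (node n + node (n + 1)) := by
    have h : (node n - node (n + 1)) * (b - a * (node n + node (n + 1))) = 0 := by
      linear_combination hn - hn'
    linarith [(mul_eq_zero.1 h).resolve_left (sub_ne_zero.2 hsr.ne')]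
  have ha : a = (1 + node n * node (n + 1))⁻¹ :=
    eq_inv_of_mul_eq_one_left (by linear_combination hn - node n * hb)
  rw [vertex, hb, ha, div_eq_inv_mul]

theorem vertex_mem_extremePoints (n : ℕ) :
    (⟨vertex n, vertex_mem_parabolaPlane n⟩ : parabolaPlane) ∈
      (closedBall (0 : parabolaPlane) 1).extremePoints ℝ := by
  refine mem_extremePoints_of_forall_apply_eq_one
    (fun i : Fin 2 => (coord (n + i)).comp parabolaPlane.subtype) ?_ ?_ ?_ ?_
  · intro y hy i
    exact (le_abs_self _).trans ((abs_coord_le_norm y _).trans (mem_closedBall_zero_iff.1 hy))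
  · exact mem_closedBall_zero_iff.2 (norm_vertex_le_one n)
  · intro i
    exact (coord_vertex_eq_one_iff n _).2 (by omega)
  · intro y _ h
    exact Subtype.ext (eq_vertex_of_coord_eq_one y.2 (h 0) (h 1))

theorem infinite_extremePoints_closedBall_parabolaPlane :
    ((closedBall (0 : parabolaPlane) 1).extremePoints ℝ).Infinite :=
  Set.infinite_of_injective_forall_mem (fun _ _ h => vertex_injective (congrArg Subtype.val h))
    vertex_mem_extremePoints

theorem not_isPolyhedralSpace : ¬ IsPolyhedralSpace SpaceC := fun h =>
  infinite_extremePoints_closedBall_parabolaPlane (h.finite_extremePoints parabolaPlane)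

end SpaceC

theorem not_polyhedral_of_isometric_c_general
    {X : Type} [NormedAddCommGroup X] [NormedSpace ℝ X]
    (hc : Nonempty (SpaceC →ₗᵢ[ℝ] X)) :
    ¬ IsPolyhedralSpace X :=
  fun h => SpaceC.not_isPolyhedralSpace (h.of_linearIsometry hc.some)

/-- If a predual of `ℓ₁` contains an isometric copy of `c`, then it is not polyhedral. -/
theorem not_polyhedral_of_isometric_c
    {X : Type} [NormedAddCommGroup X] [NormedSpace ℝ X] [CompleteSpace X]
    (hdual : Nonempty (StrongDual ℝ X ≃ₗᵢ[ℝ] EllOne))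
    (hc : Nonempty (SpaceC →ₗᵢ[ℝ] X)) :
    ¬ IsPolyhedralSpace X :=
  not_polyhedral_of_isometric_c_general hc

end
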